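/- Let $\mu, \nu$ be probability measures on $\mathbb{R}^d$, both supported on $\{|u| \le M\}$, and suppose that for some $\epsilon \in (0,1)$ one has $(1-\epsilon)\mu \le \nu \le (1+\epsilon)\mu$ as measures. Let $D^\mu(w;\sigma)$ and $D^\nu(w;\sigma)$ denote the corresponding optimal denoisers, i.e. $D^\mu(w;\sigma) = \frac{\int u\, e^{-|w-u|^2/2\sigma^2}\,\mu(du)}{\int e^{-|w-u|^2/2\sigma^2}\,\mu(du)}$ and analogously for $\nu$. Then $\sup_{w\in\mathbb{R}^d} |D^\mu(w;\sigma) - D^\nu(w;\sigma)| \le 2M\epsilon$ for every $\sigma > 0$. -/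

import Mathlib

set_option maxHeartbeats 1000000
set_option maxRecDepth 10000

open MeasureTheory
open scoped NNReal ENNReal

/-- The optimal denoiser (posterior mean under Gaussian noise of variance `σ²`)
for a data distribution `p`. -/
noncomputable def Dopt {d : ℕ} (p : Measure (EuclideanSpace ℝ (Fin d))) (σ : ℝ)
    (w : EuclideanSpace ℝ (Fin d)) : EuclideanSpace ℝ (Fin d) :=
  (∫ u, Real.exp (-‖w - u‖ ^ 2 / (2 * σ ^ 2)) ∂p)⁻¹ •
    ∫ u, Real.exp (-‖w - u‖ ^ 2 / (2 * σ ^ 2)) • u ∂p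

/-- If `μ, ν` are probability measures supported on
`{‖u‖ ≤ M}` with `(1-ε) μ ≤ ν ≤ (1+ε) μ` as measures (for some `ε ∈ (0,1)`),
then the corresponding optimal denoisers differ by at most `2 M ε`,
uniformly in `w` and in `σ > 0`. -/
theorem denoisers_close_of_sandwiched_measures
    {d : ℕ} (μ ν : Measure (EuclideanSpace ℝ (Fin d)))
    [IsProbabilityMeasure μ] [IsProbabilityMeasure ν]
    (M : ℝ) (hμM : ∀ᵐ u ∂μ, ‖u‖ ≤ M) (hνM : ∀ᵐ u ∂ν, ‖u‖ ≤ M)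
    (ε : ℝ) (hε0 : 0 < ε) (hε1 : ε < 1)
    (hsandwich : ∀ A : Set (EuclideanSpace ℝ (Fin d)), MeasurableSet A →
      ENNReal.ofReal (1 - ε) * μ A ≤ ν A ∧ ν A ≤ ENNReal.ofReal (1 + ε) * μ A) :
    ∀ (σ : ℝ), 0 < σ → ∀ w, ‖Dopt μ σ w - Dopt ν σ w‖ ≤ 2 * M * ε := by
  -- absolute continuity
  have hac : ν ≪ μ := by
    refine Measure.AbsolutelyContinuous.mk fun s hs h0 => ?_
    have h := (hsandwich s hs).2
    rw [h0, mul_zero] at h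
    exact le_antisymm h (by simp)
  haveI := Measure.haveLebesgueDecomposition_of_sigmaFinite ν μ
  have hM0 : 0 ≤ M := by
    have : (Filter.NeBot (ae μ)) := ae_neBot.mpr (IsProbabilityMeasure.ne_zero μ)
    rcases hμM.exists with ⟨u, hu⟩
    exact le_trans (norm_nonneg u) hu
  -- Radon-Nikodym bounds
  have hrn_meas : Measurable (ν.rnDeriv μ) := Measure.measurable_rnDeriv ν μ
  have h_upper : ∀ᵐ u ∂μ, ν.rnDeriv μ u ≤ ENNReal.ofReal (1 + ε) := by
    refine ae_le_of_forall_setLIntegral_le_of_sigmaFinite hrn_meas fun s hs _ => ?_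
    rw [Measure.setLIntegral_rnDeriv hac s, setLIntegral_const]
    exact (hsandwich s hs).2
  have h_lower : ∀ᵐ u ∂μ, ENNReal.ofReal (1 - ε) ≤ ν.rnDeriv μ u := by
    refine ae_le_of_forall_setLIntegral_le_of_sigmaFinite measurable_const fun s hs _ => ?_
    rw [Measure.setLIntegral_rnDeriv hac s, setLIntegral_const]
    exact (hsandwich s hs).1
  set f : EuclideanSpace ℝ (Fin d) → ℝ := fun u => (ν.rnDeriv μ u).toReal with hf_def
  have hf_meas : Measurable f := hrn_meas.ennreal_toReal
  have hf_bounds : ∀ᵐ u ∂μ, 1 - ε ≤ f u ∧ f u ≤ 1 + ε := by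
    filter_upwards [h_upper, h_lower, Measure.rnDeriv_lt_top ν μ] with u h1 h2 _
    constructor
    · have := ENNReal.toReal_mono (by finiteness) h2
      rwa [ENNReal.toReal_ofReal (by linarith)] at this
    · have := ENNReal.toReal_mono (by finiteness) h1
      rwa [ENNReal.toReal_ofReal (by linarith)] at this
  intro σ hσ w
  set g : EuclideanSpace ℝ (Fin d) → ℝ :=
    fun u => Real.exp (-‖w - u‖ ^ 2 / (2 * σ ^ 2)) with hg_def
  have hgpos : ∀ u, 0 < g u := fun u => Real.exp_pos _
  have hgle : ∀ u, g u ≤ 1 := by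
    intro u
    apply Real.exp_le_one_iff.mpr
    apply div_nonpos_of_nonpos_of_nonneg
    · simp only [neg_nonpos]; positivity
    · positivity
  have hgc : Continuous g := by fun_prop
  -- integrability helper
  have hint : ∀ (h : EuclideanSpace ℝ (Fin d) → ℝ) (ρ : Measure (EuclideanSpace ℝ (Fin d)))
      (C : ℝ), IsFiniteMeasure ρ → AEStronglyMeasurable h ρ → (∀ᵐ u ∂ρ, |h u| ≤ C) →
      Integrable h ρ := by
    intro h ρ C _ hm hb
    exact (integrable_const C).mono' hm (by simp only [Real.norm_eq_abs]; exact hb)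
  have hgint_μ : Integrable g μ :=
    hint g μ 1 inferInstance hgc.aestronglyMeasurable
      (Filter.Eventually.of_forall fun u => by
        rw [abs_of_pos (hgpos u)]; exact hgle u)
  have hgint_ν : Integrable g ν :=
    hint g ν 1 inferInstance hgc.aestronglyMeasurable
      (Filter.Eventually.of_forall fun u => by
        rw [abs_of_pos (hgpos u)]; exact hgle u)
  have hfgint : Integrable (fun u => f u * g u) μ := by
    refine hint _ μ (1 + ε) inferInstance
      ((hf_meas.aestronglyMeasurable).mul hgc.aestronglyMeasurable) ?_
    filter_upwards [hf_bounds] with u hu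
    rw [abs_mul, abs_of_pos (hgpos u), abs_of_nonneg (by linarith [hu.1] : (0:ℝ) ≤ f u)]
    calc f u * g u ≤ (1 + ε) * 1 := by
          apply mul_le_mul hu.2 (hgle u) (le_of_lt (hgpos u)) (by linarith)
      _ = 1 + ε := mul_one _
  set a : ℝ := ∫ u, g u ∂μ with ha_def
  set b : ℝ := ∫ u, g u ∂ν with hb_def
  have ha : 0 < a := by
    rw [ha_def, integral_pos_iff_support_of_nonneg (fun u => le_of_lt (hgpos u)) hgint_μ]
    have : Function.support g = Set.univ := by
      ext u; simp [Function.support, ne_of_gt (hgpos u)]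
    rw [this]
    simp
  have hb : 0 < b := by
    rw [hb_def, integral_pos_iff_support_of_nonneg (fun u => le_of_lt (hgpos u)) hgint_ν]
    have : Function.support g = Set.univ := by
      ext u; simp [Function.support, ne_of_gt (hgpos u)]
    rw [this]
    simp
  -- change of measure for b
  have hb_eq : b = ∫ u, f u * g u ∂μ := by
    rw [hb_def, ← integral_rnDeriv_smul hac]
    simp [hf_def, smul_eq_mul]
  have hba_low : (1 - ε) * a ≤ b := by
    rw [hb_eq, ha_def, ← integral_const_mul]
    refine integral_mono_ae (hgint_μ.const_mul _) hfgint ?_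
    filter_upwards [hf_bounds] with u hu
    exact mul_le_mul_of_nonneg_right hu.1 (le_of_lt (hgpos u))
  have hba_high : b ≤ (1 + ε) * a := by
    rw [hb_eq, ha_def, ← integral_const_mul]
    refine integral_mono_ae hfgint (hgint_μ.const_mul _) ?_
    filter_upwards [hf_bounds] with u hu
    exact mul_le_mul_of_nonneg_right hu.2 (le_of_lt (hgpos u))
  -- vector integrals
  have hsm : AEStronglyMeasurable (fun u : EuclideanSpace ℝ (Fin d) => g u • u) μ :=
    (hgc.smul continuous_id).aestronglyMeasurable
  have hsm' : AEStronglyMeasurable (fun u : EuclideanSpace ℝ (Fin d) => g u • u) ν :=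
    (hgc.smul continuous_id).aestronglyMeasurable
  have hAint : Integrable (fun u => g u • u) μ := by
    refine (integrable_const M).mono' hsm ?_
    filter_upwards [hμM] with u hu
    rw [norm_smul, Real.norm_eq_abs, abs_of_pos (hgpos u)]
    calc g u * ‖u‖ ≤ 1 * ‖u‖ := mul_le_mul_of_nonneg_right (hgle u) (norm_nonneg u)
      _ = ‖u‖ := one_mul _
      _ ≤ M := hu
  have hBint : Integrable (fun u => g u • u) ν := by
    refine (integrable_const M).mono' hsm' ?_
    filter_upwards [hνM] with u hu
    rw [norm_smul, Real.norm_eq_abs, abs_of_pos (hgpos u)]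
    calc g u * ‖u‖ ≤ 1 * ‖u‖ := mul_le_mul_of_nonneg_right (hgle u) (norm_nonneg u)
      _ = ‖u‖ := one_mul _
      _ ≤ M := hu
  have hfBint : Integrable (fun u => f u • (g u • u)) μ :=
    (integrable_rnDeriv_smul_iff hac).mpr hBint
  set A : EuclideanSpace ℝ (Fin d) := ∫ u, g u • u ∂μ with hA_def
  set B : EuclideanSpace ℝ (Fin d) := ∫ u, g u • u ∂ν with hB_def
  have hB_eq : B = ∫ u, f u • (g u • u) ∂μ := by
    rw [hB_def, ← integral_rnDeriv_smul hac]
  -- the difference of denoisers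
  set φ : EuclideanSpace ℝ (Fin d) → ℝ :=
    fun u => a⁻¹ * g u - b⁻¹ * (f u * g u) with hφ_def
  have hφint : Integrable φ μ := (hgint_μ.const_mul a⁻¹).sub (hfgint.const_mul b⁻¹)
  have hφ0 : ∫ u, φ u ∂μ = 0 := by
    rw [hφ_def]
    rw [integral_sub (hgint_μ.const_mul a⁻¹) (hfgint.const_mul b⁻¹),
      integral_const_mul, integral_const_mul, ← ha_def, ← hb_eq,
      inv_mul_cancel₀ (ne_of_gt ha), inv_mul_cancel₀ (ne_of_gt hb), sub_self]
  have hint1 : Integrable (fun u => (a⁻¹ * g u) • u) μ := by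
    simp only [mul_smul]
    exact hAint.smul a⁻¹
  have hint2 : Integrable (fun u => (b⁻¹ * (f u * g u)) • u) μ := by
    simp only [mul_smul]
    exact hfBint.smul b⁻¹
  have hdiff : Dopt μ σ w - Dopt ν σ w = ∫ u, φ u • u ∂μ := by
    have e0 : Dopt μ σ w = a⁻¹ • A := rfl
    have e0' : Dopt ν σ w = b⁻¹ • B := rfl
    have e1 : a⁻¹ • A = ∫ u, (a⁻¹ * g u) • u ∂μ := by
      rw [hA_def, ← integral_smul]
      congr 1
      funext u
      rw [mul_smul]
    have e2 : b⁻¹ • B = ∫ u, (b⁻¹ * (f u * g u)) • u ∂μ := by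
      rw [hB_eq, ← integral_smul]
      congr 1
      funext u
      rw [smul_smul, smul_smul, mul_assoc]
    rw [e0, e0', e1, e2, ← integral_sub hint1 hint2]
    congr 1
    funext u
    simp only [hφ_def]
    rw [sub_smul]
  -- the core bound :  ∫ |φ| ≤ 2 ε
  have hcore : ∫ u, |φ u| ∂μ ≤ 2 * ε := by
    rcases le_total a b with hab | hab
    · -- a ≤ b : use |x| = 2 max (-x) 0 + x
      have habs : ∀ u, |φ u| = 2 * max (-φ u) 0 + φ u := by
        intro u
        rcases le_or_gt 0 (φ u) with h | h
        · rw [abs_of_nonneg h, max_eq_right (by linarith)]; ring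
        · rw [abs_of_neg h, max_eq_left (by linarith)]; ring
      have hmax_int : Integrable (fun u => max (-φ u) 0) μ := hφint.neg.pos_part
      have h1 : ∫ u, |φ u| ∂μ = 2 * ∫ u, max (-φ u) 0 ∂μ := by
        calc ∫ u, |φ u| ∂μ = ∫ u, 2 * max (-φ u) 0 + φ u ∂μ := by
              congr 1; funext u; exact habs u
          _ = 2 * ∫ u, max (-φ u) 0 ∂μ + ∫ u, φ u ∂μ := by
              rw [integral_add (hmax_int.const_mul 2) hφint, integral_const_mul]
          _ = 2 * ∫ u, max (-φ u) 0 ∂μ := by rw [hφ0, add_zero]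
      have hcoef : a⁻¹ ≤ (1 + ε) * b⁻¹ := by
        rw [inv_eq_one_div, inv_eq_one_div, mul_one_div, div_le_div_iff₀ ha hb]
        linarith [hba_high]
      have h2 : ∫ u, max (-φ u) 0 ∂μ ≤ ((1 + ε) * b⁻¹ - a⁻¹) * a := by
        calc ∫ u, max (-φ u) 0 ∂μ ≤ ∫ u, ((1 + ε) * b⁻¹ - a⁻¹) * g u ∂μ := by
              refine integral_mono_ae hmax_int (hgint_μ.const_mul _) ?_
              filter_upwards [hf_bounds] with u hu
              refine max_le ?_ (mul_nonneg (by linarith [hcoef]) (le_of_lt (hgpos u)))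
              have : -φ u = (b⁻¹ * f u - a⁻¹) * g u := by simp only [hφ_def]; ring
              rw [this]
              apply mul_le_mul_of_nonneg_right _ (le_of_lt (hgpos u))
              have : b⁻¹ * f u ≤ b⁻¹ * (1 + ε) :=
                mul_le_mul_of_nonneg_left hu.2 (by positivity)
              linarith
          _ = ((1 + ε) * b⁻¹ - a⁻¹) * a := by rw [integral_const_mul, ← ha_def]
      rw [h1]
      have hab' : a * b⁻¹ ≤ 1 := by
        rw [← div_eq_mul_inv]; exact div_le_one_of_le₀ hab (le_of_lt hb)
      have hai : a⁻¹ * a = 1 := inv_mul_cancel₀ (ne_of_gt ha)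
      nlinarith [h2, mul_pos ha hb]
    · -- b ≤ a : use |x| = 2 max x 0 - x
      have habs : ∀ u, |φ u| = 2 * max (φ u) 0 - φ u := by
        intro u
        rcases le_or_gt 0 (φ u) with h | h
        · rw [abs_of_nonneg h, max_eq_left h]; ring
        · rw [abs_of_neg h, max_eq_right (by linarith)]; ring
      have hmax_int : Integrable (fun u => max (φ u) 0) μ := hφint.pos_part
      have h1 : ∫ u, |φ u| ∂μ = 2 * ∫ u, max (φ u) 0 ∂μ := by
        calc ∫ u, |φ u| ∂μ = ∫ u, 2 * max (φ u) 0 - φ u ∂μ := by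
              congr 1; funext u; exact habs u
          _ = 2 * ∫ u, max (φ u) 0 ∂μ - ∫ u, φ u ∂μ := by
              rw [integral_sub (hmax_int.const_mul 2) hφint, integral_const_mul]
          _ = 2 * ∫ u, max (φ u) 0 ∂μ := by rw [hφ0, sub_zero]
      have hcoef : (1 - ε) * b⁻¹ ≤ a⁻¹ := by
        rw [inv_eq_one_div, inv_eq_one_div, mul_one_div, div_le_div_iff₀ hb ha]
        linarith [hba_low]
      have h2 : ∫ u, max (φ u) 0 ∂μ ≤ (a⁻¹ - (1 - ε) * b⁻¹) * a := by
        calc ∫ u, max (φ u) 0 ∂μ ≤ ∫ u, (a⁻¹ - (1 - ε) * b⁻¹) * g u ∂μ := by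
              refine integral_mono_ae hmax_int (hgint_μ.const_mul _) ?_
              filter_upwards [hf_bounds] with u hu
              refine max_le ?_ (mul_nonneg (by linarith [hcoef]) (le_of_lt (hgpos u)))
              have : φ u = (a⁻¹ - b⁻¹ * f u) * g u := by simp only [hφ_def]; ring
              rw [this]
              apply mul_le_mul_of_nonneg_right _ (le_of_lt (hgpos u))
              have : b⁻¹ * (1 - ε) ≤ b⁻¹ * f u :=
                mul_le_mul_of_nonneg_left hu.1 (by positivity)
              linarith
          _ = (a⁻¹ - (1 - ε) * b⁻¹) * a := by rw [integral_const_mul, ← ha_def]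
      rw [h1]
      have hab' : 1 ≤ a * b⁻¹ := by
        rw [← div_eq_mul_inv]; exact (one_le_div hb).mpr hab
      have hai : a⁻¹ * a = 1 := inv_mul_cancel₀ (ne_of_gt ha)
      nlinarith [h2, mul_pos ha hb]
  -- finish
  rw [hdiff]
  calc ‖∫ u, φ u • u ∂μ‖ ≤ ∫ u, ‖φ u • u‖ ∂μ := norm_integral_le_integral_norm _
    _ ≤ ∫ u, M * |φ u| ∂μ := by
        refine integral_mono_ae ?_ (hφint.abs.const_mul M) ?_
        · have : Integrable (fun u => φ u • u) μ := by
            have h := hint1.sub hint2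
            refine (congrArg (fun F => Integrable F μ) ?_).mpr h
            funext u
            simp only [hφ_def, Pi.sub_apply]
            rw [sub_smul]
          exact this.norm
        · filter_upwards [hμM] with u hu
          rw [norm_smul, Real.norm_eq_abs]
          calc |φ u| * ‖u‖ ≤ |φ u| * M := mul_le_mul_of_nonneg_left hu (abs_nonneg _)
            _ = M * |φ u| := mul_comm _ _
    _ = M * ∫ u, |φ u| ∂μ := integral_const_mul _ _
    _ ≤ M * (2 * ε) := mul_le_mul_of_nonneg_left hcore hM0
    _ = 2 * M * ε := by ring
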